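/- arXiv:1811.09025 — 2 statements merged into one kernel-verified Lean document; each statement's English description precedes it below -/
import Mathlib

section
/- Let A be a symmetric real n×n matrix and r₀ ∈ ℝⁿ. For any real polynomial q, ‖q(A) r₀‖₂ ≤ (max over eigenvalues λ of A of |q(λ)|) · ‖r₀‖₂. Consequently, for the GMRES iterate minimizing the residual over x₀ + 𝒦ₘ(A, r₀) with r₀ = b − A x₀ ≠ 0, the relative residual satisfies ‖b − A xₘ‖₂ / ‖r₀‖₂ ≤ min over polynomials q of degree at most m+1 with q(0) = 1 of max over eigenvalues λ of A of |q(λ)|. -/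
open Matrix Polynomial

/-- The Krylov subspace `𝒦ₘ(A, r₀) = span {r₀, A r₀, …, Aᵐ r₀}`. -/
def krylov {n : ℕ} (A : Matrix (Fin n) (Fin n) ℝ) (r₀ : Fin n → ℝ) (m : ℕ) :
    Submodule ℝ (Fin n → ℝ) :=
  Submodule.span ℝ (Set.range fun i : Fin (m + 1) => (A ^ (i : ℕ)) *ᵥ r₀)

/-- The Euclidean (ℓ²) norm of a vector in `Fin k → ℝ`. -/
noncomputable def norm2 {k : ℕ} (x : Fin k → ℝ) : ℝ := Real.sqrt (x ⬝ᵥ x)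

/-!
Diagonalize `A = U D Uᵀ` with `U` orthogonal and `D` the diagonal of eigenvalues. Then
`q(A) = U q(D) Uᵀ`; orthogonal matrices preserve the Euclidean norm and the diagonal matrix
`q(D)` stretches it by at most `max |q(λᵢ)|`, which gives the spectral bound. For GMRES, any `q`
of degree `≤ m + 1` with `q(0) = 1` is `1 + X p` with `deg p ≤ m`, and `x = x₀ - p(A) r₀` is a
competitor in `x₀ + 𝒦ₘ(A, r₀)` whose residual is exactly `q(A) r₀`.
-/

theorem Set.Finite.le_ciSup₂_of_mem {ι α : Type*} [ConditionallyCompleteLinearOrder α]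
    {s : Set ι} {f : ι → α} (hs : s.Finite) {x : ι} (hx : x ∈ s) (hfx : sSup ∅ ≤ f x) :
    f x ≤ ⨆ i ∈ s, f i :=
  not_lt.mp fun h => lt_irrefl _ ((hs.ciSup_lt_iff ⟨x, hx, hfx⟩).mp h x hx)

section norm2

variable {k : ℕ}

lemma norm2_nonneg (x : Fin k → ℝ) : 0 ≤ norm2 x := Real.sqrt_nonneg _

lemma norm2_unitary_mulVec (U : unitaryGroup (Fin k) ℝ) (x : Fin k → ℝ) :
    norm2 ((U : Matrix (Fin k) (Fin k) ℝ) *ᵥ x) = norm2 x := by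
  have hU : (U : Matrix (Fin k) (Fin k) ℝ)ᵀ * U = 1 := by
    simpa [star_eq_conjTranspose] using Unitary.coe_star_mul_self U
  have h : ((U : Matrix (Fin k) (Fin k) ℝ) *ᵥ x) ᵥ* U = x := by
    rw [← vecMul_transpose, vecMul_vecMul, hU, vecMul_one]
  rw [norm2, norm2, dotProduct_mulVec, h]

lemma norm2_diagonal_mulVec_le {e : Fin k → ℝ} {C : ℝ} (hC : 0 ≤ C) (he : ∀ i, |e i| ≤ C)
    (y : Fin k → ℝ) : norm2 (diagonal e *ᵥ y) ≤ C * norm2 y := by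
  have hsq : (diagonal e *ᵥ y) ⬝ᵥ (diagonal e *ᵥ y) ≤ (C * C) * (y ⬝ᵥ y) := by
    simp only [dotProduct, mulVec_diagonal, Finset.mul_sum]
    refine Finset.sum_le_sum fun i _ => ?_
    have hei : e i * e i ≤ C * C := by
      simpa [abs_mul_abs_self] using mul_self_le_mul_self (abs_nonneg _) (he i)
    calc e i * y i * (e i * y i) = (e i * e i) * (y i * y i) := by ring
      _ ≤ (C * C) * (y i * y i) := mul_le_mul_of_nonneg_right hei (mul_self_nonneg _)
  calc norm2 (diagonal e *ᵥ y) ≤ Real.sqrt ((C * C) * (y ⬝ᵥ y)) := Real.sqrt_le_sqrt hsq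
    _ = C * norm2 y := by rw [Real.sqrt_mul (mul_self_nonneg C), Real.sqrt_mul_self hC, norm2]

end norm2

section spectral

variable {ι : Type*} [Fintype ι] [DecidableEq ι] {A : Matrix ι ι ℝ}

lemma Matrix.IsHermitian.aeval_eq (hA : A.IsHermitian) (q : ℝ[X]) :
    aeval A q = (hA.eigenvectorUnitary : Matrix ι ι ℝ) *
      diagonal (q.eval ∘ hA.eigenvalues) * (star hA.eigenvectorUnitary : unitaryGroup ι ℝ) := by
  rw [← cfc_polynomial q A hA.isSelfAdjoint, hA.cfc_eq, IsHermitian.cfc,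
    Unitary.conjStarAlgAut_apply, RCLike.ofReal_real_eq_id, Function.id_comp, Unitary.coe_star]

lemma abs_eval_le_iSup_spectrum (q : ℝ[X]) {lam : ℝ} (hlam : lam ∈ spectrum ℝ A) :
    |q.eval lam| ≤ ⨆ μ ∈ spectrum ℝ A, |q.eval μ| :=
  A.finite_real_spectrum.le_ciSup₂_of_mem (f := fun μ => |q.eval μ|) hlam
    (by rw [Real.sSup_empty]; exact abs_nonneg _)

lemma iSup_spectrum_abs_eval_nonneg (q : ℝ[X]) : 0 ≤ ⨆ μ ∈ spectrum ℝ A, |q.eval μ| :=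
  Real.iSup_nonneg fun _ => Real.iSup_nonneg fun _ => abs_nonneg _

end spectral

lemma Matrix.IsHermitian.norm2_aeval_mulVec_le {n : ℕ} {A : Matrix (Fin n) (Fin n) ℝ}
    (hA : A.IsHermitian) (q : ℝ[X]) (v : Fin n → ℝ) :
    norm2 (aeval A q *ᵥ v) ≤ (⨆ μ ∈ spectrum ℝ A, |q.eval μ|) * norm2 v := by
  rw [hA.aeval_eq, ← mulVec_mulVec, ← mulVec_mulVec, norm2_unitary_mulVec]
  calc _ ≤ (⨆ μ ∈ spectrum ℝ A, |q.eval μ|) * norm2 (_ *ᵥ v) :=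
        norm2_diagonal_mulVec_le (iSup_spectrum_abs_eval_nonneg q)
          (fun i => abs_eval_le_iSup_spectrum q (hA.eigenvalues_mem_spectrum_real i)) _
    _ = _ := by rw [norm2_unitary_mulVec]

lemma aeval_mulVec_mem_krylov {n m : ℕ} (A : Matrix (Fin n) (Fin n) ℝ) (r₀ : Fin n → ℝ)
    {p : ℝ[X]} (hp : p.natDegree ≤ m) : aeval A p *ᵥ r₀ ∈ krylov A r₀ m := by
  rw [aeval_eq_sum_range' (Nat.lt_succ_of_le hp), sum_mulVec]
  refine Submodule.sum_mem _ fun i hi => ?_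
  rw [smul_mulVec]
  exact Submodule.smul_mem _ _ (Submodule.subset_span ⟨⟨i, Finset.mem_range.mp hi⟩, rfl⟩)

lemma sub_mulVec_sub_aeval_divX {R ι : Type*} [CommRing R] [Fintype ι] [DecidableEq ι]
    {A : Matrix ι ι R} {b x₀ r₀ : ι → R} (hr₀ : r₀ = b - A *ᵥ x₀) {q : R[X]}
    (hq : q.eval 0 = 1) :
    b - A *ᵥ (x₀ - aeval A q.divX *ᵥ r₀) = aeval A q *ᵥ r₀ := by
  have hq' : X * q.divX + 1 = q := by
    simpa [coeff_zero_eq_eval_zero, hq] using q.X_mul_divX_add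
  conv_rhs => rw [← hq']
  rw [map_add, map_mul, aeval_X, map_one, add_mulVec, one_mulVec, ← mulVec_mulVec,
    mulVec_sub, hr₀]
  abel

lemma norm2_residual_le_norm2_aeval_mulVec {n m : ℕ} {A : Matrix (Fin n) (Fin n) ℝ}
    {b x₀ r₀ xm : Fin n → ℝ} (hr₀ : r₀ = b - A *ᵥ x₀)
    (hxm : ∀ x : Fin n → ℝ, x - x₀ ∈ krylov A r₀ m →
      norm2 (b - A *ᵥ xm) ≤ norm2 (b - A *ᵥ x))
    {q : ℝ[X]} (hdeg : q.natDegree ≤ m + 1) (hq : q.eval 0 = 1) :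
    norm2 (b - A *ᵥ xm) ≤ norm2 (aeval A q *ᵥ r₀) := by
  rw [← sub_mulVec_sub_aeval_divX hr₀ hq]
  refine hxm _ ?_
  rw [sub_sub_cancel_left]
  refine Submodule.neg_mem _ (aeval_mulVec_mem_krylov A r₀ ?_)
  rw [natDegree_divX_eq_natDegree_tsub_one]
  omega

theorem gmres_convergence_symmetric_general {n m : ℕ}
    (A : Matrix (Fin n) (Fin n) ℝ) (hsymm : Aᵀ = A)
    (b x₀ : Fin n → ℝ) (r₀ : Fin n → ℝ) (hr₀ : r₀ = b - A *ᵥ x₀)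
    (xm : Fin n → ℝ)
    (hxmmin : ∀ x : Fin n → ℝ, x - x₀ ∈ krylov A r₀ m →
      norm2 (b - A *ᵥ xm) ≤ norm2 (b - A *ᵥ x)) :
    (∀ q : Polynomial ℝ,
      norm2 ((aeval A q) *ᵥ r₀) ≤ (⨆ lam ∈ spectrum ℝ A, |q.eval lam|) * norm2 r₀) ∧
    norm2 (b - A *ᵥ xm) / norm2 r₀ ≤
      ⨅ q : {q : Polynomial ℝ // q.natDegree ≤ m + 1 ∧ q.eval 0 = 1},
        ⨆ lam ∈ spectrum ℝ A, |Polynomial.eval lam q.1| := by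
  have hA : A.IsHermitian := by rwa [IsHermitian, conjTranspose_eq_transpose_of_trivial]
  refine ⟨fun q => hA.norm2_aeval_mulVec_le q r₀, ?_⟩
  have : Nonempty {q : ℝ[X] // q.natDegree ≤ m + 1 ∧ q.eval 0 = 1} :=
    ⟨⟨1, by simp, by simp⟩⟩
  refine le_ciInf fun ⟨q, hdeg, hq⟩ => div_le_of_le_mul₀ (norm2_nonneg _)
    (iSup_spectrum_abs_eval_nonneg q) ?_
  exact (norm2_residual_le_norm2_aeval_mulVec hr₀ hxmmin hdeg hq).trans (hA.norm2_aeval_mulVec_le q r₀)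

/-- GMRES convergence bound for a symmetric matrix `A`: for any polynomial `q`,
`‖q(A) r₀‖₂ ≤ (max_{λ ∈ σ(A)} |q(λ)|) ‖r₀‖₂`, and consequently the GMRES
iterate `xₘ` minimizing the residual over `x₀ + 𝒦ₘ(A, r₀)` satisfies
`‖b - A xₘ‖₂ / ‖r₀‖₂ ≤ min_{q, deg q ≤ m+1, q(0)=1} max_{λ ∈ σ(A)} |q(λ)|`. -/
theorem gmres_convergence_symmetric {n m : ℕ}
    (A : Matrix (Fin n) (Fin n) ℝ) (hsymm : Aᵀ = A)
    (b x₀ : Fin n → ℝ) (r₀ : Fin n → ℝ) (hr₀ : r₀ = b - A *ᵥ x₀)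
    (hr₀ne : r₀ ≠ 0)
    (xm : Fin n → ℝ) (hxmK : xm - x₀ ∈ krylov A r₀ m)
    (hxmmin : ∀ x : Fin n → ℝ, x - x₀ ∈ krylov A r₀ m →
      norm2 (b - A *ᵥ xm) ≤ norm2 (b - A *ᵥ x)) :
    (∀ q : Polynomial ℝ,
      norm2 ((aeval A q) *ᵥ r₀) ≤ (⨆ lam ∈ spectrum ℝ A, |q.eval lam|) * norm2 r₀) ∧
    norm2 (b - A *ᵥ xm) / norm2 r₀ ≤
      ⨅ q : {q : Polynomial ℝ // q.natDegree ≤ m + 1 ∧ q.eval 0 = 1},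
        ⨆ lam ∈ spectrum ℝ A, |Polynomial.eval lam q.1| :=
  gmres_convergence_symmetric_general A hsymm b x₀ r₀ hr₀ xm hxmmin
end

section
/- Let A be a symmetric positive definite real n×n matrix with smallest eigenvalue λ_min and largest eigenvalue λ_max, let κ = λ_max/λ_min, let b, x₀ ∈ ℝⁿ, r₀ = b − A x₀, and let x* be the solution of Ax = b. Then for every m ≥ 1 there exists x ∈ x₀ + 𝒦_{m−1}(A, r₀) such that ‖x − x*‖_A ≤ 2 ((√κ − 1)/(√κ + 1))ᵐ ‖x₀ − x*‖_A; in particular the m-th conjugate gradient iterate, which minimizes ‖x − x*‖_A over x₀ + 𝒦_{m−1}(A, r₀), satisfies this bound. -/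
/-!
The error of `x₀ + z`, `z ∈ 𝒦_{m-1}(A, r₀)`, is `p(A)(x₀ - x*)` for a polynomial `p` of degree
at most `m` with `p(0) = 1`, and every such `p` arises. Since `p(A)` commutes with `A`,
`‖p(A) e‖_A ≤ max_{λ ∈ σ(A)} |p(λ)| · ‖e‖_A`. Taking for `p` the Chebyshev polynomial `T_m`
transported to `[λ_min, λ_max]` and normalized at `0`, that maximum is at most `1 / T_m(σ)`
with `σ = (κ + 1)/(κ - 1) = (γ + γ⁻¹)/2` for `γ = (√κ + 1)/(√κ - 1)`, and
`T_m(σ) = cosh (m log γ) ≥ γᵐ / 2`.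
-/

open Matrix

/-- The `A`-norm `‖z‖_A = √(zᵀ A z)` of a vector. -/
noncomputable def normA {n : ℕ} (A : Matrix (Fin n) (Fin n) ℝ)
    (z : Fin n → ℝ) : ℝ := Real.sqrt (z ⬝ᵥ (A *ᵥ z))

open Polynomial Real

theorem Polynomial.Chebyshev.pow_div_two_le_eval_T_real {γ : ℝ} (hγ : 0 < γ) (m : ℕ) :
    γ ^ m / 2 ≤ (Chebyshev.T ℝ m).eval ((γ + γ⁻¹) / 2) := by
  rw [← cosh_log hγ, Chebyshev.T_real_cosh, cosh_eq, Int.cast_natCast, exp_nat_mul, exp_log hγ]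
  have := exp_pos (-(m * log γ))
  linarith

noncomputable def chebyshevResidual (a b : ℝ) (m : ℕ) : ℝ[X] :=
  C ((Chebyshev.T ℝ m).eval ((b + a) / (b - a)))⁻¹ *
    (Chebyshev.T ℝ m).comp (C ((b + a) / (b - a)) - C (2 / (b - a)) * X)

section ChebyshevResidual

variable {a b : ℝ}

theorem one_le_eval_T_add_div_sub (ha : 0 < a) (hab : a < b) (m : ℕ) :
    1 ≤ (Chebyshev.T ℝ m).eval ((b + a) / (b - a)) :=
  Chebyshev.one_le_eval_T_real m ((one_le_div (by linarith)).mpr (by linarith))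

theorem chebyshevResidual_eval_zero (ha : 0 < a) (hab : a < b) (m : ℕ) :
    (chebyshevResidual a b m).eval 0 = 1 := by
  simp only [chebyshevResidual, eval_mul, eval_C, eval_comp, eval_sub, eval_X, mul_zero, sub_zero]
  exact inv_mul_cancel₀ (by linarith [one_le_eval_T_add_div_sub ha hab m])

theorem natDegree_chebyshevResidual_le (m : ℕ) : (chebyshevResidual a b m).natDegree ≤ m := by
  refine natDegree_C_mul_le _ _ |>.trans <| natDegree_comp_le.trans ?_
  rw [Chebyshev.natDegree_T, Int.natAbs_natCast]
  have h : (C ((b + a) / (b - a)) - C (2 / (b - a)) * X).natDegree ≤ 1 := by compute_degree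
  simpa using Nat.mul_le_mul_left m h

theorem abs_eval_chebyshevResidual_le (ha : 0 < a) (hab : a < b) (m : ℕ) {x : ℝ}
    (hx : x ∈ Set.Icc a b) :
    |(chebyshevResidual a b m).eval x| ≤ ((Chebyshev.T ℝ m).eval ((b + a) / (b - a)))⁻¹ := by
  have hT := one_le_eval_T_add_div_sub ha hab m
  simp only [chebyshevResidual, eval_mul, eval_C, eval_comp, eval_sub, eval_X]
  rw [abs_mul, abs_of_pos (by positivity)]
  refine mul_le_of_le_one_right (by positivity) (Chebyshev.abs_eval_T_real_le_one m ?_)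
  rw [show (b + a) / (b - a) - 2 / (b - a) * x = (b + a - 2 * x) / (b - a) by ring, abs_div,
    abs_of_pos (by linarith : 0 < b - a), div_le_one (by linarith), abs_le]
  constructor <;> linarith [hx.1, hx.2]

theorem inv_eval_T_add_div_sub_le (ha : 0 < a) (hab : a < b) (m : ℕ) :
    ((Chebyshev.T ℝ m).eval ((b + a) / (b - a)))⁻¹ ≤
      2 * ((√(b / a) - 1) / (√(b / a) + 1)) ^ m := by
  set s := √(b / a)
  have hs2 : s ^ 2 * a = b := by
    rw [sq_sqrt (div_pos (ha.trans hab) ha).le, div_mul_cancel₀ _ ha.ne']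
  have hs : 1 < s := (lt_sqrt zero_le_one).mpr (by rw [one_pow, one_lt_div ha]; exact hab)
  have hγ : 0 < (s + 1) / (s - 1) := div_pos (by linarith) (by linarith)
  have hσ : ((s + 1) / (s - 1) + ((s + 1) / (s - 1))⁻¹) / 2 = (b + a) / (b - a) := by
    rw [inv_div, div_add_div _ _ (by linarith) (by linarith), div_div,
      div_eq_div_iff (by nlinarith) (by linarith)]
    linear_combination (-4 : ℝ) * hs2
  have hT := Chebyshev.pow_div_two_le_eval_T_real hγ m
  rw [hσ] at hT
  calc ((Chebyshev.T ℝ m).eval ((b + a) / (b - a)))⁻¹ ≤ (((s + 1) / (s - 1)) ^ m / 2)⁻¹ :=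
        inv_anti₀ (by positivity) hT
    _ = 2 * ((s - 1) / (s + 1)) ^ m := by rw [inv_div, div_eq_mul_inv, ← inv_pow, inv_div]

theorem exists_eval_zero_eq_one_abs_eval_le (ha : 0 < a) (hab : a ≤ b) {m : ℕ} (hm : 1 ≤ m) :
    ∃ p : ℝ[X], p.eval 0 = 1 ∧ p.natDegree ≤ m ∧
      ∀ x ∈ Set.Icc a b, |p.eval x| ≤ 2 * ((√(b / a) - 1) / (√(b / a) + 1)) ^ m := by
  rcases hab.eq_or_lt with rfl | hab
  · refine ⟨1 - C a⁻¹ * X, by simp, ?_, fun x hx => ?_⟩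
    · have : (1 - C a⁻¹ * X).natDegree ≤ 1 := by compute_degree
      omega
    · rw [Set.Icc_self, Set.mem_singleton_iff] at hx
      subst hx
      simp [ha.ne', zero_pow (by omega : m ≠ 0)]
  · exact ⟨chebyshevResidual a b m, chebyshevResidual_eval_zero ha hab m,
      natDegree_chebyshevResidual_le m, fun x hx =>
        (abs_eval_chebyshevResidual_le ha hab m hx).trans (inv_eval_T_add_div_sub_le ha hab m)⟩

end ChebyshevResidual

section Krylov

variable {n : ℕ} (A : Matrix (Fin n) (Fin n) ℝ)

theorem aeval_mulVec_mem_krylov_s16 (r : Fin n → ℝ) {k : ℕ} {q : ℝ[X]} (hq : q.natDegree ≤ k) :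
    aeval A q *ᵥ r ∈ krylov A r k := by
  rw [aeval_eq_sum_range' (Nat.lt_succ_of_le hq), sum_mulVec]
  refine Submodule.sum_mem _ fun i hi => ?_
  rw [smul_mulVec]
  exact Submodule.smul_mem _ _ (Submodule.subset_span ⟨⟨i, Finset.mem_range.mp hi⟩, rfl⟩)

theorem exists_mem_krylov_add_eq_aeval_mulVec (e : Fin n → ℝ) {k : ℕ} {p : ℝ[X]}
    (hp0 : p.eval 0 = 1) (hp : p.natDegree ≤ k + 1) :
    ∃ z ∈ krylov A (-(A *ᵥ e)) k, e + z = aeval A p *ᵥ e := by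
  have hdecomp : p = 1 + p.divX * X := by
    conv_lhs => rw [← X_mul_divX_add p]
    rw [coeff_zero_eq_eval_zero, hp0, map_one, mul_comm, add_comm]
  refine ⟨aeval A (-p.divX) *ᵥ (-(A *ᵥ e)), aeval_mulVec_mem_krylov_s16 A _ ?_, ?_⟩
  · rw [natDegree_neg, natDegree_divX_eq_natDegree_tsub_one]
    omega
  · conv_rhs => rw [hdecomp]
    rw [map_neg, neg_mulVec, mulVec_neg, neg_neg, map_add, map_one, map_mul, aeval_X, add_mulVec,
      one_mulVec, mulVec_mulVec]

end Krylov

section Spectral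

open scoped MatrixOrder

theorem Matrix.PosSemidef.aeval_mulVec_dotProduct_le {ι : Type*} [Fintype ι] [DecidableEq ι]
    {A : Matrix ι ι ℝ} (hA : A.PosSemidef) (p : ℝ[X]) {M : ℝ}
    (hp : ∀ x ∈ spectrum ℝ A, |p.eval x| ≤ M) (v : ι → ℝ) :
    (aeval A p *ᵥ v) ⬝ᵥ (A *ᵥ (aeval A p *ᵥ v)) ≤ M ^ 2 * (v ⬝ᵥ (A *ᵥ v)) := by
  have hsa : IsSelfAdjoint A := hA.isHermitian
  have hP : (aeval A p)ᵀ = aeval A p := by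
    rw [← cfc_polynomial p A]
    exact (cfc_predicate (p.eval ·) A : IsSelfAdjoint _)
  have hle : aeval A p * A * aeval A p ≤ M ^ 2 • A := by
    rw [← cfc_polynomial p A]
    nth_rw 2 [← cfc_id' ℝ A]
    nth_rw 4 [← cfc_id' ℝ A]
    rw [← cfc_mul .., ← cfc_mul .., ← cfc_smul ..]
    refine cfc_mono fun x hx => ?_
    have hx0 : 0 ≤ x := spectrum_nonneg_of_nonneg (nonneg_iff_posSemidef.mpr hA) hx
    have hpx : p.eval x ^ 2 ≤ M ^ 2 :=
      sq_le_sq' (abs_le.mp (hp x hx)).1 (abs_le.mp (hp x hx)).2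
    simp only [smul_eq_mul]
    nlinarith [mul_le_mul_of_nonneg_left hpx hx0]
  have hquad := (le_iff.mp hle).dotProduct_mulVec_nonneg v
  rw [sub_mulVec, dotProduct_sub, smul_mulVec, dotProduct_smul, smul_eq_mul, sub_nonneg,
    star_trivial] at hquad
  have hPv : v ᵥ* aeval A p = aeval A p *ᵥ v := by rw [← vecMul_transpose, hP]
  rwa [← mulVec_mulVec, ← mulVec_mulVec, dotProduct_mulVec v, hPv] at hquad

theorem Matrix.PosDef.pos_of_mem_spectrum {ι : Type*} [Fintype ι] [DecidableEq ι]
    {A : Matrix ι ι ℝ} (hA : A.PosDef) {x : ℝ} (hx : x ∈ spectrum ℝ A) : 0 < x :=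
  (isStrictlyPositive_iff_posDef.mpr hA).spectrum_pos hx

theorem normA_aeval_mulVec_le {n : ℕ} {A : Matrix (Fin n) (Fin n) ℝ} (hA : A.PosSemidef)
    (p : ℝ[X]) {M : ℝ} (hM : 0 ≤ M) (hp : ∀ x ∈ spectrum ℝ A, |p.eval x| ≤ M)
    (v : Fin n → ℝ) : normA A (aeval A p *ᵥ v) ≤ M * normA A v := by
  rw [normA, normA, ← sqrt_sq hM, ← sqrt_mul (sq_nonneg M)]
  exact sqrt_le_sqrt (hA.aeval_mulVec_dotProduct_le p hp v)

end Spectral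

/-- CG convergence bound: for SPD `A` with extreme eigenvalues `λ_min, λ_max`
and `κ = λ_max / λ_min`, for every `m ≥ 1` there exists
`x ∈ x₀ + 𝒦_{m-1}(A, r₀)` with
`‖x - x*‖_A ≤ 2 ((√κ - 1)/(√κ + 1))ᵐ ‖x₀ - x*‖_A`; in particular the `m`-th CG
iterate, which minimizes `‖x - x*‖_A` over `x₀ + 𝒦_{m-1}(A, r₀)`, satisfies
this bound. -/
theorem cg_convergence_bound {n : ℕ}
    (A : Matrix (Fin n) (Fin n) ℝ) (hsymm : Aᵀ = A)
    (hpos : ∀ z : Fin n → ℝ, z ≠ 0 → 0 < z ⬝ᵥ (A *ᵥ z))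
    (lmin lmax : ℝ)
    (hlmin : lmin ∈ spectrum ℝ A ∧ ∀ lam ∈ spectrum ℝ A, lmin ≤ lam)
    (hlmax : lmax ∈ spectrum ℝ A ∧ ∀ lam ∈ spectrum ℝ A, lam ≤ lmax)
    (κ : ℝ) (hκ : κ = lmax / lmin)
    (b x₀ : Fin n → ℝ) (r₀ : Fin n → ℝ) (hr₀ : r₀ = b - A *ᵥ x₀)
    (xstar : Fin n → ℝ) (hxstar : A *ᵥ xstar = b) :
    ∀ m : ℕ, 1 ≤ m →
      (∃ z ∈ krylov A r₀ (m - 1),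
        normA A (x₀ + z - xstar) ≤
          2 * ((Real.sqrt κ - 1) / (Real.sqrt κ + 1)) ^ m * normA A (x₀ - xstar)) ∧
      (∀ xm : Fin n → ℝ,
        xm - x₀ ∈ krylov A r₀ (m - 1) →
        (∀ x : Fin n → ℝ, x - x₀ ∈ krylov A r₀ (m - 1) →
          normA A (xm - xstar) ≤ normA A (x - xstar)) →
        normA A (xm - xstar) ≤
          2 * ((Real.sqrt κ - 1) / (Real.sqrt κ + 1)) ^ m * normA A (x₀ - xstar)) := by
  intro m hm
  have hA : A.PosDef := .of_dotProduct_mulVec_pos hsymm fun z hz => hpos z hz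
  have hlmin_pos : 0 < lmin := hA.pos_of_mem_spectrum hlmin.1
  obtain ⟨p, hp0, hpdeg, hpbound⟩ :=
    exists_eval_zero_eq_one_abs_eval_le hlmin_pos (hlmin.2 _ hlmax.1) hm
  have hp : ∀ x ∈ spectrum ℝ A, |p.eval x| ≤ 2 * ((√κ - 1) / (√κ + 1)) ^ m :=
    fun x hx => hκ ▸ hpbound x ⟨hlmin.2 x hx, hlmax.2 x hx⟩
  obtain ⟨z, hz, hze⟩ :=
    exists_mem_krylov_add_eq_aeval_mulVec A (x₀ - xstar) (k := m - 1) hp0 (by omega)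
  have hr : -(A *ᵥ (x₀ - xstar)) = r₀ := by
    rw [hr₀, ← hxstar, mulVec_sub]
    abel
  have hbound : ∃ z ∈ krylov A r₀ (m - 1), normA A (x₀ + z - xstar) ≤
      2 * ((√κ - 1) / (√κ + 1)) ^ m * normA A (x₀ - xstar) := by
    refine ⟨z, hr ▸ hz, ?_⟩
    rw [add_sub_right_comm, hze]
    exact normA_aeval_mulVec_le hA.posSemidef p ((abs_nonneg _).trans (hp lmin hlmin.1)) hp _
  refine ⟨hbound, fun xm _ hmin => ?_⟩
  obtain ⟨z, hz, hzb⟩ := hbound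
  exact (hmin (x₀ + z) (by rwa [add_sub_cancel_left])).trans hzb
end
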